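/- Let S be a complete RN module over ℝ with base (Ω, F, P) and x₀ ∈ S with ‖x₀‖ = I_{H(S)}. Let E ∈ F̃ with E ⊂ H(S) and P(E) > 0 be such that Rank_D(S) < 2 for every D ∈ F̃ with D ⊂ E and P(D) > 0. Then for every y ∈ S with A_y ⊂ E there exists ξ ∈ L⁰(F,ℝ) such that y = ξx₀. -/

import Mathlib

open MeasureTheory Filter Set

noncomputable section

namespace RNM

variable {Ω : Type*} [MeasurableSpace Ω]

/-- `L⁰(F, ℝ)`: equivalence classes of real random variables mod a.e. equality. -/
abbrev L0 (μ : Measure Ω) : Type _ := Ω →ₘ[μ] ℝ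

open Classical in
/-- The equivalence class of the indicator function of a (measurable) set. -/
noncomputable def ind (μ : Measure Ω) (A : Set Ω) : L0 μ :=
  if h : MeasurableSet A then
    AEEqFun.mk (A.indicator fun _ => (1 : ℝ)) (aestronglyMeasurable_const.indicator h)
  else 0

/-- The constant function, as an element of `L⁰`. -/
noncomputable def cst (μ : Measure Ω) (r : ℝ) : L0 μ := AEEqFun.const Ω r

/-- `A ⊂ B` modulo null sets. -/
def aeSub (μ : Measure Ω) (A B : Set Ω) : Prop := μ (A \ B) = 0

/-- `A = B` modulo null sets. -/
def aeEqS (μ : Measure Ω) (A B : Set Ω) : Prop := μ ((A \ B) ∪ (B \ A)) = 0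

variable {μ : Measure Ω} {S : Type*} [AddCommGroup S]

/-- The axioms of a random normed module over ℝ with base `(Ω, F, μ)`: `S` is a left module
over the algebra `L⁰(F,ℝ)` (with module multiplication `sm`) and `nrm` is an `L⁰`-norm. -/
structure IsRNModule (μ : Measure Ω) (sm : L0 μ → S → S) (nrm : S → L0 μ) : Prop where
  smul_add : ∀ ξ x y, sm ξ (x + y) = sm ξ x + sm ξ y
  add_smul : ∀ ξ η x, sm (ξ + η) x = sm ξ x + sm η x
  mul_smul : ∀ ξ η x, sm (ξ * η) x = sm ξ (sm η x)
  one_smul : ∀ x, sm 1 x = x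
  nrm_nonneg : ∀ x, 0 ≤ nrm x
  nrm_smul : ∀ ξ x, nrm (sm ξ x) = |ξ| * nrm x
  nrm_add : ∀ x y, nrm (x + y) ≤ nrm x + nrm y
  nrm_eq_zero : ∀ x, nrm x = 0 → x = 0

/-- `x` and `y` are `L⁰`-independent on `F`. -/
def Indep (sm : L0 μ → S → S) (x y : S) (F : Set Ω) : Prop :=
  ∀ ξ η : L0 μ, sm (ξ * ind μ F) x + sm (η * ind μ F) y = 0 →
    ξ * ind μ F = 0 ∧ η * ind μ F = 0

/-- `Rank_D(S) ≥ 2`. -/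
def RankGe2 (sm : L0 μ → S → S) (D : Set Ω) : Prop := ∃ x y : S, Indep sm x y D

/-- `A_x = [‖x‖ > 0]`. -/
def Aset (nrm : S → L0 μ) (x : S) : Set Ω := {ω | 0 < (nrm x) ω}

/-- `A_{xy} = A_x ∩ A_y`. -/
def Axy (nrm : S → L0 μ) (x y : S) : Set Ω := Aset nrm x ∩ Aset nrm y

/-- `B_{xy} = A_{xy} ∩ A_{x-y}`. -/
def Bxy (nrm : S → L0 μ) (x y : S) : Set Ω := Axy nrm x y ∩ Aset nrm (x - y)

/-- `H` is (a representative of) the support `H(S) = [⋁{‖x‖ : x ∈ S} > 0]`. -/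
def IsSupport (nrm : S → L0 μ) (H : Set Ω) : Prop :=
  MeasurableSet H ∧ (∀ x : S, aeSub μ (Aset nrm x) H) ∧
    ∀ B : Set Ω, MeasurableSet B → aeSub μ B H → 0 < μ B →
      ∃ x : S, 0 < μ (B ∩ Aset nrm x)

/-- A sequence in `S` is Cauchy for the topology of convergence in probability. -/
def CauchyInProb (μ : Measure Ω) (nrm : S → L0 μ) (u : ℕ → S) : Prop :=
  ∀ ε : ℝ, 0 < ε →
    Tendsto (fun p : ℕ × ℕ => μ {ω | ε ≤ |(nrm (u p.1 - u p.2)) ω|}) atTop (nhds 0)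

/-- `u n → x` in probability (i.e. `‖u n - x‖ → 0` in probability). -/
def TendstoInProb (μ : Measure Ω) (nrm : S → L0 μ) (u : ℕ → S) (x : S) : Prop :=
  ∀ ε : ℝ, 0 < ε →
    Tendsto (fun n => μ {ω | ε ≤ |(nrm (u n - x)) ω|}) atTop (nhds 0)

/-- Completeness of a random normed module. -/
def CompleteRN (μ : Measure Ω) (nrm : S → L0 μ) : Prop :=
  ∀ u : ℕ → S, CauchyInProb μ nrm u → ∃ x : S, TendstoInProb μ nrm u x

/-- The random unit sphere `S(1)`. -/
def sphere (nrm : S → L0 μ) : Set S :=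
  {x | ∃ A : Set Ω, MeasurableSet A ∧ 0 < μ A ∧ nrm x = ind μ A}

/-- The random closed unit ball `U(1)`. -/
def ball (nrm : S → L0 μ) : Set S := {x | nrm x ≤ 1}

/-- `ε` is an admissible random convexity parameter on `D`: `ε ≥ 0` and `0 < ε ≤ 2` on `D`. -/
def Admissible (μ : Measure Ω) (D : Set Ω) (ε : L0 μ) : Prop :=
  0 ≤ ε ∧ ∀ᵐ ω ∂μ, ω ∈ D → 0 < ε ω ∧ ε ω ≤ 2

/-- midpoint `(x+y)/2`. -/
def mid (μ : Measure Ω) (sm : L0 μ → S → S) (x y : S) : S := sm (cst μ (1/2)) (x + y)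

/-- The set whose infimum (in the a.s. order of `L⁰`) is the modulus of random
convexity `δ_D(ε)`. -/
def modSet (μ : Measure Ω) (sm : L0 μ → S → S) (nrm : S → L0 μ) (D : Set Ω) (ε : L0 μ) :
    Set (L0 μ) :=
  {z | ∃ x ∈ sphere nrm, ∃ y ∈ sphere nrm, aeSub μ D (Bxy nrm x y) ∧
    ε * ind μ D ≤ ind μ D * nrm (x - y) ∧
    z = ind μ D - ind μ D * nrm (mid μ sm x y)}

/-- `S` is random uniformly convex: `δ_{H(S)}(ε) > 0` on `H(S)` for every admissible `ε`. -/
def RandomUniformlyConvex (μ : Measure Ω) (sm : L0 μ → S → S) (nrm : S → L0 μ)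
    (H : Set Ω) : Prop :=
  ∀ ε : L0 μ, Admissible μ H ε → ∀ d : L0 μ, IsGLB (modSet μ sm nrm H ε) d →
    ∀ᵐ ω ∂μ, ω ∈ H → 0 < d ω

/-- `G` is (a representative of) `G(S)`. -/
def IsGSet (μ : Measure Ω) (sm : L0 μ → S → S) (H G : Set Ω) : Prop :=
  MeasurableSet G ∧ aeSub μ G H ∧ 0 < μ G ∧ RankGe2 sm G ∧
    ∀ D : Set Ω, MeasurableSet D → aeSub μ D (H \ G) → 0 < μ D → ¬ RankGe2 sm D


/-! Where `y = ζ x₀` with `‖x₀‖ = 1`, the coefficient is recovered as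
`ζ = |ζ| - |ζ - |ζ|| = ‖y‖ - ‖y - ‖y‖ x₀‖`, and the right-hand side makes sense globally.
Non-independence of `x₀` and `y` on each positive-measure part of `A_y` makes `y` locally such a
multiple, so the remainder `y - coeff · x₀` vanishes on a positive-measure part of its own
support; that support is therefore null. -/

theorem abs_sub_abs_sub_abs_self (t : ℝ) : |t| - |(t - |t|)| = t := by
  rcases abs_cases t with ⟨h, -⟩ | ⟨h, ht⟩
  · rw [h, sub_self, abs_zero, sub_zero]
  · rw [h, sub_neg_eq_add, ← two_mul, abs_mul, abs_two, abs_of_neg ht]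
    ring

theorem aeSub.trans {μ : Measure Ω} {A B C : Set Ω} (hAB : aeSub μ A B) (hBC : aeSub μ B C) :
    aeSub μ A C :=
  measure_mono_null (fun ω hω => (em (ω ∈ B)).elim (fun hB => .inr ⟨hB, hω.2⟩)
    fun hB => .inl ⟨hω.1, hB⟩) (measure_union_null hAB hBC)

theorem aeSub_of_subset {μ : Measure Ω} {A B : Set Ω} (h : A ⊆ B) : aeSub μ A B :=
  measure_mono_null (sdiff_eq_empty.2 h).subset (measure_empty (μ := μ))

theorem coeFn_ind {μ : Measure Ω} {A : Set Ω} (hA : MeasurableSet A) :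
    ⇑(ind μ A) =ᵐ[μ] A.indicator fun _ => (1 : ℝ) := by
  rw [ind, dif_pos hA]
  exact AEEqFun.coeFn_mk _ _

theorem ind_mul_self {μ : Measure Ω} {A : Set Ω} (hA : MeasurableSet A) :
    ind μ A * ind μ A = ind μ A := by
  refine AEEqFun.ext ?_
  filter_upwards [AEEqFun.coeFn_mul (ind μ A) (ind μ A), coeFn_ind (μ := μ) hA] with ω hmul hA
  by_cases hω : ω ∈ A <;> simp [hmul, hA, hω]

theorem abs_ind {μ : Measure Ω} {A : Set Ω} (hA : MeasurableSet A) : |ind μ A| = ind μ A := by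
  refine AEEqFun.ext ?_
  filter_upwards [AEEqFun.coeFn_abs (ind μ A), coeFn_ind (μ := μ) hA] with ω habs hA
  by_cases hω : ω ∈ A <;> simp [habs, hA, hω]

theorem measurableSet_Aset {S : Type*} (nrm : S → L0 μ) (z : S) : MeasurableSet (Aset nrm z) :=
  (nrm z).stronglyMeasurable.measurable measurableSet_Ioi

theorem exists_mul_eq_ind_of_mul_ind_ne_zero {μ : Measure Ω} {D : Set Ω} (hD : MeasurableSet D)
    {η : L0 μ} (hη : η * ind μ D ≠ 0) :
    ∃ D' ⊆ D, MeasurableSet D' ∧ 0 < μ D' ∧ ∃ c : L0 μ, c * (η * ind μ D) = ind μ D' := by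
  set b := η * ind μ D
  set D' := D ∩ {ω | b ω ≠ 0}
  have hD' : MeasurableSet D' :=
    hD.inter (b.stronglyMeasurable.measurable (measurableSet_singleton 0).compl)
  have hD'pos : 0 < μ D' := by
    refine pos_iff_ne_zero.2 fun hD'0 => hη (AEEqFun.ext ?_)
    filter_upwards [measure_eq_zero_iff_ae_notMem.1 hD'0, AEEqFun.coeFn_mul η (ind μ D),
      coeFn_ind (μ := μ) hD, AEEqFun.coeFn_zero (μ := μ) (β := ℝ)] with ω hω hmul hD hzero
    by_contra hbω
    have hωD : ω ∈ D := by
      by_contra hωD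
      simp [b, hmul, hD, hωD, hzero] at hbω
    exact hω ⟨hωD, by simpa [hzero] using hbω⟩
  let c : L0 μ := AEEqFun.mk (D'.indicator fun ω => (b ω)⁻¹)
    (b.stronglyMeasurable.measurable.inv.indicator hD').aestronglyMeasurable
  have hc : ⇑c =ᵐ[μ] D'.indicator fun ω => (b ω)⁻¹ := AEEqFun.coeFn_mk _ _
  refine ⟨D', inter_subset_left, hD', hD'pos, c, AEEqFun.ext ?_⟩
  filter_upwards [AEEqFun.coeFn_mul c b, hc, coeFn_ind (μ := μ) hD'] with ω hmul hc hD'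
  rw [hmul, Pi.mul_apply, hc, hD']
  by_cases hω : ω ∈ D'
  · simp [hω, inv_mul_cancel₀ hω.2]
  · simp [hω]

def coeff (sm : L0 μ → S → S) (nrm : S → L0 μ) (x₀ y : S) : L0 μ :=
  nrm y - nrm (y - sm (nrm y) x₀)

namespace IsRNModule

variable {sm : L0 μ → S → S} {nrm : S → L0 μ}

theorem zero_smul (hRN : IsRNModule μ sm nrm) (x : S) : sm 0 x = 0 := by
  have h := hRN.add_smul 0 0 x
  rwa [add_zero, left_eq_add] at h

theorem smul_zero (hRN : IsRNModule μ sm nrm) (ξ : L0 μ) : sm ξ 0 = 0 := by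
  have h := hRN.smul_add ξ 0 0
  rwa [add_zero, left_eq_add] at h

theorem neg_smul (hRN : IsRNModule μ sm nrm) (ξ : L0 μ) (x : S) : sm (-ξ) x = -sm ξ x := by
  refine eq_neg_of_add_eq_zero_left ?_
  rw [← hRN.add_smul, neg_add_cancel, hRN.zero_smul]

theorem sub_smul (hRN : IsRNModule μ sm nrm) (ξ η : L0 μ) (x : S) :
    sm (ξ - η) x = sm ξ x - sm η x := by
  rw [sub_eq_add_neg, hRN.add_smul, hRN.neg_smul, sub_eq_add_neg]

theorem smul_sub (hRN : IsRNModule μ sm nrm) (ξ : L0 μ) (x y : S) :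
    sm ξ (x - y) = sm ξ x - sm ξ y := by
  rw [eq_sub_iff_add_eq, ← hRN.smul_add, sub_add_cancel]

theorem nrm_zero (hRN : IsRNModule μ sm nrm) : nrm 0 = 0 := by
  have h := hRN.nrm_smul 0 0
  rw [hRN.zero_smul] at h
  rw [h]
  refine AEEqFun.ext ?_
  filter_upwards [AEEqFun.coeFn_mul |(0 : L0 μ)| (nrm 0), AEEqFun.coeFn_abs (0 : L0 μ),
    AEEqFun.coeFn_zero (μ := μ) (β := ℝ)] with ω hmul habs hzero
  simp [hmul, habs, hzero]

theorem nrm_ind_smul (hRN : IsRNModule μ sm nrm) {A : Set Ω} (hA : MeasurableSet A) (x : S) :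
    nrm (sm (ind μ A) x) = ind μ A * nrm x := by
  rw [hRN.nrm_smul, abs_ind hA]

theorem nrm_sub_smul_le (hRN : IsRNModule μ sm nrm) (ξ : L0 μ) (x y : S) :
    nrm (y - sm ξ x) ≤ nrm y + |ξ| * nrm x := by
  rw [sub_eq_add_neg, ← hRN.neg_smul]
  refine (hRN.nrm_add _ _).trans_eq ?_
  rw [hRN.nrm_smul, abs_neg]

theorem eq_zero_of_measure_Aset_eq_zero (hRN : IsRNModule μ sm nrm) {z : S}
    (hz : μ (Aset nrm z) = 0) : z = 0 := by
  refine hRN.nrm_eq_zero z (le_antisymm ?_ (hRN.nrm_nonneg z))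
  refine AEEqFun.coeFn_le.1 ?_
  filter_upwards [measure_eq_zero_iff_ae_notMem.1 hz, AEEqFun.coeFn_zero (μ := μ) (β := ℝ)]
    with ω hω hzero
  simpa [hzero, Aset] using hω

theorem measure_eq_zero_of_ind_smul_eq_zero (hRN : IsRNModule μ sm nrm) {z : S} {D : Set Ω}
    (hD : MeasurableSet D) (hDz : D ⊆ Aset nrm z) (hz : sm (ind μ D) z = 0) : μ D = 0 := by
  have h : ind μ D * nrm z = 0 := by rw [← hRN.nrm_ind_smul hD, hz, hRN.nrm_zero]
  refine measure_eq_zero_iff_ae_notMem.2 ?_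
  filter_upwards [AEEqFun.ext_iff.1 h, AEEqFun.coeFn_mul (ind μ D) (nrm z), coeFn_ind (μ := μ) hD,
    AEEqFun.coeFn_zero (μ := μ) (β := ℝ)] with ω h hmul hD hzero hωD
  have hpos : 0 < nrm z ω := hDz hωD
  simp [hmul, hD, hωD, hzero] at h
  exact hpos.ne' h

theorem mul_ind_eq_zero_of_smul_eq_zero (hRN : IsRNModule μ sm nrm) {H D : Set Ω} {x₀ : S}
    {ξ : L0 μ} (hH : MeasurableSet H) (hx₀ : nrm x₀ = ind μ H) (hD : MeasurableSet D)
    (hDH : aeSub μ D H) (h : sm (ξ * ind μ D) x₀ = 0) : ξ * ind μ D = 0 := by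
  have habs : |ξ * ind μ D| * ind μ H = 0 := by rw [← hx₀, ← hRN.nrm_smul, h, hRN.nrm_zero]
  refine AEEqFun.ext ?_
  filter_upwards [AEEqFun.ext_iff.1 habs, AEEqFun.coeFn_mul |ξ * ind μ D| (ind μ H),
    AEEqFun.coeFn_abs (ξ * ind μ D), AEEqFun.coeFn_mul ξ (ind μ D), coeFn_ind (μ := μ) hH,
    coeFn_ind (μ := μ) hD, measure_eq_zero_iff_ae_notMem.1 hDH,
    AEEqFun.coeFn_zero (μ := μ) (β := ℝ)] with ω habs hmulH hab hmulD hH hD hDH hzero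
  by_cases hω : ω ∈ D
  · have hωH : ω ∈ H := by_contra fun hωH => hDH ⟨hω, hωH⟩
    simpa [hmulH, hab, hmulD, hH, hD, hω, hωH, hzero] using habs
  · simp [hmulD, hD, hω, hzero]

theorem exists_ind_smul_eq_smul_of_not_indep (hRN : IsRNModule μ sm nrm) {H D : Set Ω} {x₀ y : S}
    (hH : MeasurableSet H) (hx₀ : nrm x₀ = ind μ H) (hD : MeasurableSet D) (hDH : aeSub μ D H)
    (hni : ¬ Indep sm x₀ y D) :
    ∃ D' ⊆ D, MeasurableSet D' ∧ 0 < μ D' ∧ ∃ ζ : L0 μ, sm (ind μ D') y = sm ζ x₀ := by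
  simp only [Indep, not_forall, not_and_or] at hni
  obtain ⟨ξ, η, hrel, hne⟩ := hni
  have hη : η * ind μ D ≠ 0 := by
    intro hη
    rw [hη, hRN.zero_smul, add_zero] at hrel
    exact hne.elim (· (hRN.mul_ind_eq_zero_of_smul_eq_zero hH hx₀ hD hDH hrel)) (· hη)
  obtain ⟨D', hD'D, hD', hD'pos, c, hc⟩ := exists_mul_eq_ind_of_mul_ind_ne_zero hD hη
  refine ⟨D', hD'D, hD', hD'pos, -(c * (ξ * ind μ D)), ?_⟩
  have h := congrArg (sm c) hrel
  rw [hRN.smul_zero, hRN.smul_add, ← hRN.mul_smul, ← hRN.mul_smul, hc] at h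
  rw [hRN.neg_smul, eq_neg_iff_add_eq_zero, add_comm, h]

theorem ind_smul_sub_coeff_smul_eq_zero (hRN : IsRNModule μ sm nrm) {H D : Set Ω} {x₀ y : S}
    {ζ : L0 μ} (hH : MeasurableSet H) (hx₀ : nrm x₀ = ind μ H) (hD : MeasurableSet D)
    (hDH : aeSub μ D H) (hζ : sm (ind μ D) y = sm ζ x₀) :
    sm (ind μ D) (y - sm (coeff sm nrm x₀ y) x₀) = 0 := by
  set ζ' := ind μ D * ζ
  have hζ' : sm (ind μ D) y = sm ζ' x₀ := by
    rw [hRN.mul_smul, ← hζ, ← hRN.mul_smul, ind_mul_self hD]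
  have hy : ind μ D * nrm y = |ζ'| * ind μ H := by
    rw [← hRN.nrm_ind_smul hD, hζ', hRN.nrm_smul, hx₀]
  have hw : ind μ D * nrm (y - sm (nrm y) x₀) = |ζ' - ind μ D * nrm y| * ind μ H := by
    rw [← hRN.nrm_ind_smul hD, hRN.smul_sub, hζ', ← hRN.mul_smul, ← hRN.sub_smul, hRN.nrm_smul,
      hx₀]
  have hc : ind μ D * coeff sm nrm x₀ y = ζ' := by
    refine AEEqFun.ext ?_
    have hcoeff : ⇑(coeff sm nrm x₀ y) =ᵐ[μ] ⇑(nrm y) - ⇑(nrm (y - sm (nrm y) x₀)) :=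
      AEEqFun.coeFn_sub _ _
    filter_upwards [AEEqFun.ext_iff.1 hy, AEEqFun.ext_iff.1 hw, hcoeff,
      AEEqFun.coeFn_mul (ind μ D) (coeff sm nrm x₀ y),
      AEEqFun.coeFn_mul (ind μ D) ζ, AEEqFun.coeFn_mul (ind μ D) (nrm y),
      AEEqFun.coeFn_mul (ind μ D) (nrm (y - sm (nrm y) x₀)),
      AEEqFun.coeFn_mul |ζ'| (ind μ H), AEEqFun.coeFn_mul |ζ' - ind μ D * nrm y| (ind μ H),
      AEEqFun.coeFn_abs ζ', AEEqFun.coeFn_abs (ζ' - ind μ D * nrm y),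
      AEEqFun.coeFn_sub ζ' (ind μ D * nrm y), coeFn_ind (μ := μ) hH, coeFn_ind (μ := μ) hD,
      measure_eq_zero_iff_ae_notMem.1 hDH]
      with ω hy hw hcoeff hmulc hmulζ hmuly hmulw hmulH hmulH' habs habs' hsub hH hD hDH
    simp only [ζ', hmulc, hcoeff, hmulζ, hmuly, hmulw, hmulH, hmulH', habs, habs', hsub, hD,
      Pi.mul_apply, Pi.sub_apply] at hy hw ⊢
    by_cases hω : ω ∈ D
    · have hωH : ω ∈ H := by_contra fun hωH => hDH ⟨hω, hωH⟩
      simp only [hH, hω, hωH, indicator_of_mem, one_mul, mul_one] at hy hw ⊢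
      rw [hy, hw, hy, abs_sub_abs_sub_abs_self]
    · simp [hω]
  rw [hRN.smul_sub, ← hRN.mul_smul, hc, hζ', sub_self]

theorem aeSub_Aset_sub_coeff_smul (hRN : IsRNModule μ sm nrm) (x₀ y : S) :
    aeSub μ (Aset nrm (y - sm (coeff sm nrm x₀ y) x₀)) (Aset nrm y) := by
  have hw := hRN.nrm_sub_smul_le (nrm y) x₀ y
  have hr := hRN.nrm_sub_smul_le (coeff sm nrm x₀ y) x₀ y
  refine measure_eq_zero_iff_ae_notMem.2 ?_
  filter_upwards [AEEqFun.coeFn_le.2 hw, AEEqFun.coeFn_le.2 hr,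
    AEEqFun.coeFn_le.2 (hRN.nrm_nonneg y), AEEqFun.coeFn_le.2 (hRN.nrm_nonneg (y - sm (nrm y) x₀)),
    AEEqFun.coeFn_add (nrm y) (|nrm y| * nrm x₀), AEEqFun.coeFn_mul |nrm y| (nrm x₀),
    AEEqFun.coeFn_abs (nrm y), AEEqFun.coeFn_add (nrm y) (|coeff sm nrm x₀ y| * nrm x₀),
    AEEqFun.coeFn_mul |coeff sm nrm x₀ y| (nrm x₀), AEEqFun.coeFn_abs (coeff sm nrm x₀ y),
    AEEqFun.coeFn_sub (nrm y) (nrm (y - sm (nrm y) x₀)), AEEqFun.coeFn_zero (μ := μ) (β := ℝ)]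
    with ω hw hr hy0 hw0 hadd hmul habs hadd' hmul' habs' hsub hzero ⟨hrω, hyω⟩
  simp only [Aset, mem_ofPred_eq, not_lt] at hrω hyω
  simp only [hzero, Pi.zero_apply, hadd, hadd', hmul, hmul', habs, habs', Pi.add_apply,
    Pi.mul_apply] at hw hr hy0 hw0
  have hyω : nrm y ω = 0 := le_antisymm hyω hy0
  have hcω : coeff sm nrm x₀ y ω = 0 := by
    rw [coeff, hsub, Pi.sub_apply, hyω]
    simp only [hyω, abs_zero, zero_mul, add_zero] at hw
    linarith
  simp only [hyω, hcω, abs_zero, zero_mul, add_zero] at hr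
  linarith

end IsRNModule

theorem rank_lt_two_forces_multiple_general {Ω : Type*} [MeasurableSpace Ω] (μ : Measure Ω)
    {S : Type*} [AddCommGroup S]
    (sm : L0 μ → S → S) (nrm : S → L0 μ) (hRN : IsRNModule μ sm nrm)
    (H : Set Ω) (hH : IsSupport nrm H)
    (x₀ : S) (hx₀ : nrm x₀ = ind μ H)
    (E : Set Ω) (hEH : aeSub μ E H)
    (hrk : ∀ D : Set Ω, MeasurableSet D → aeSub μ D E → 0 < μ D → ¬ RankGe2 sm D)
    (y : S) (hy : aeSub μ (Aset nrm y) E) :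
    ∃ ξ : L0 μ, y = sm ξ x₀ := by
  set r := y - sm (coeff sm nrm x₀ y) x₀
  have hrE : aeSub μ (Aset nrm r) E := (hRN.aeSub_Aset_sub_coeff_smul x₀ y).trans hy
  have hr : μ (Aset nrm r) = 0 := by
    by_contra hpos
    have hni : ¬ Indep sm x₀ y (Aset nrm r) := fun hind =>
      hrk _ (measurableSet_Aset nrm r) hrE (pos_iff_ne_zero.2 hpos) ⟨x₀, y, hind⟩
    obtain ⟨D, hDr, hD, hDpos, ζ, hζ⟩ := hRN.exists_ind_smul_eq_smul_of_not_indep hH.1 hx₀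
      (measurableSet_Aset nrm r) (hrE.trans hEH) hni
    have hDH : aeSub μ D H := ((aeSub_of_subset hDr).trans hrE).trans hEH
    exact hDpos.ne' (hRN.measure_eq_zero_of_ind_smul_eq_zero hD hDr
      (hRN.ind_smul_sub_coeff_smul_eq_zero hH.1 hx₀ hD hDH hζ))
  exact ⟨coeff sm nrm x₀ y, sub_eq_zero.1 (hRN.eq_zero_of_measure_Aset_eq_zero hr)⟩

/-- **Proposition 2.2(1).** If `Rank_D(S) < 2` for every positive-probability `D ⊂ E`,
then every `y ∈ S` with `A_y ⊂ E` is an `L⁰`-multiple of `x₀` (where `‖x₀‖ = I_{H(S)}`). -/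
theorem rank_lt_two_forces_multiple {Ω : Type*} [MeasurableSpace Ω] (μ : Measure Ω)
    [IsProbabilityMeasure μ] {S : Type*} [AddCommGroup S]
    (sm : L0 μ → S → S) (nrm : S → L0 μ) (hRN : IsRNModule μ sm nrm)
    (hcomp : CompleteRN μ nrm) (H : Set Ω) (hH : IsSupport nrm H)
    (x₀ : S) (hx₀ : nrm x₀ = ind μ H)
    (E : Set Ω) (hEm : MeasurableSet E) (hEH : aeSub μ E H) (hEpos : 0 < μ E)
    (hrk : ∀ D : Set Ω, MeasurableSet D → aeSub μ D E → 0 < μ D → ¬ RankGe2 sm D)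
    (y : S) (hy : aeSub μ (Aset nrm y) E) :
    ∃ ξ : L0 μ, y = sm ξ x₀ :=
  rank_lt_two_forces_multiple_general μ sm nrm hRN H hH x₀ hx₀ E hEH hrk y hy

end RNM
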